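/- Let 1 < α ≤ 2, ξ, η ∈ ℝ^d with |ξ| ≪ 1 and |η| close to e₁ (so |η| ∼ 1). Then the Jacobian determinant of the map (ξ₁, η) ↦ (ξ + η, |ξ|^α + |η|^α), viewed as a map of the d+1 variables (ξ₁, η₁, …, η_d) with (ξ₂,…,ξ_d) fixed, equals α·|ξ₁|ξ|^{α−2} − η₁|η|^{α−2}| and is comparable to 1. -/

import Mathlib

open MeasureTheory Complex Filter
open scoped ENNReal NNReal

noncomputable section

abbrev Rd (d : ℕ) := EuclideanSpace ℝ (Fin d)

variable {d : ℕ}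

/-- Fourier transform on `ℝ^d` (non-normalized convention). -/
def FT (f : Rd d → ℂ) (ξ : Rd d) : ℂ :=
  ∫ x : Rd d, Complex.exp (-Complex.I * ((inner ℝ x ξ : ℝ) : ℂ)) * f x

/-- Inverse Fourier transform on `ℝ^d`. -/
def invFT (f : Rd d → ℂ) (x : Rd d) : ℂ :=
  ((2 * Real.pi) ^ d)⁻¹ • ∫ ξ : Rd d, Complex.exp (Complex.I * ((inner ℝ x ξ : ℝ) : ℂ)) * f ξ

/-- The Fourier multiplier `|∇|^α`. -/
def fracOp (α : ℝ) (f : Rd d → ℂ) : Rd d → ℂ :=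
  invFT (fun ξ => (‖ξ‖ : ℂ) ^ (α : ℂ) * FT f ξ)

/-- The linear fractional Schrödinger propagator `U(t) = e^{-it|∇|^α}`. -/
def Uprop (α : ℝ) (t : ℝ) (f : Rd d → ℂ) : Rd d → ℂ :=
  invFT (fun ξ => Complex.exp (-Complex.I * t * (‖ξ‖ : ℂ) ^ (α : ℂ)) * FT f ξ)

/-- Inhomogeneous Sobolev norm `H^s`. -/
def HsNorm (s : ℝ) (f : Rd d → ℂ) : ℝ :=
  (∫ ξ : Rd d, (1 + ‖ξ‖) ^ (2 * s) * ‖FT f ξ‖ ^ 2) ^ (1/2 : ℝ)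

/-- Space-time Fourier transform. -/
def STFT (u : ℝ → Rd d → ℂ) (τ : ℝ) (ξ : Rd d) : ℂ :=
  ∫ t : ℝ, Complex.exp (-Complex.I * t * τ) * FT (u t) ξ

/-- Bourgain space norm `X^{s,b}` adapted to the dispersion relation `τ = |ξ|^α`. -/
def XsbNorm (α s b : ℝ) (u : ℝ → Rd d → ℂ) : ℝ :=
  (∫ p : ℝ × Rd d,
      (1 + ‖p.2‖) ^ (2 * s) * (1 + |p.1 - ‖p.2‖ ^ α|) ^ (2 * b) * ‖STFT u p.1 p.2‖ ^ 2)
    ^ (1/2 : ℝ)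

/-- The Fourier multiplier `ψ(D - n)` from the Wiener decomposition. -/
def wienerPiece (ψ : SchwartzMap (Rd d) ℂ) (n : Fin d → ℤ) (f : Rd d → ℂ) : Rd d → ℂ :=
  invFT (fun ξ => ψ (ξ - (show Rd d from WithLp.toLp 2 (fun i => (n i : ℝ)))) * FT f ξ)

/-- The frequency vector `ξ = (ξ₁, ξ̄)` with first coordinate `a` and remaining
coordinates given by `ξbar`. -/
def xfull (d : ℕ) (a : ℝ) (ξbar : Fin d → ℝ) : Rd d :=
  show Rd d from WithLp.toLp 2 (fun i => if (i : ℕ) = 0 then a else ξbar i)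

/-- The change of variables `(ξ₁, η) ↦ (|ξ|^α + |η|^α, ξ + η)` (with `ξ̄` fixed). -/
def Phi (d : ℕ) (α : ℝ) (ξbar : Fin d → ℝ) : ℝ × Rd d → ℝ × Rd d :=
  fun p => (‖xfull d p.1 ξbar‖ ^ α + ‖p.2‖ ^ α, xfull d p.1 ξbar + p.2)

/-! With `N = ‖·‖ ^ α` and `ξ = ξ⁰ + ξ₁ e₁`, the map is `(ξ₁, η) ↦ (N (ξ⁰ + ξ₁ e₁) + N η, ξ⁰ + ξ₁ e₁ + η)`.
Its differential is a shear in the second component corrected by a rank-one row, so its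
determinant is `DN(ξ) e₁ - DN(η) e₁ = α (ξ₁ |ξ|^(α-2) - η₁ |η|^(α-2))`. For `α > 1` the function
`N` is `C¹`, so this is continuous in `(ξ, η)`; it equals `-α` at `(0, e₁)`, hence stays between
`-3α/2` and `-α/2` nearby. -/

theorem LinearMap.det_eq_sub_of_apply_eq {R M : Type*} [CommRing R] [AddCommGroup M] [Module R M]
    [Module.Free R M] [Module.Finite R M] (L : R × M →ₗ[R] R × M) (c : R) (f : M →ₗ[R] R)
    (e : M) (hL : ∀ s v, L (s, v) = (c * s + f v, s • e + v)) :
    LinearMap.det L = c - f e := by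
  classical
  set b := Module.Free.chooseBasis R M
  set B := (Module.Basis.singleton Unit R).prod b
  have hmat : LinearMap.toMatrix B B L = Matrix.fromBlocks (Matrix.of fun _ _ => c)
      (Matrix.of fun _ j => f (b j)) (Matrix.of fun i _ => b.repr e i) 1 := by
    ext (i | i) (j | j) <;>
      simp [LinearMap.toMatrix_apply, B, hL, Matrix.one_apply, Finsupp.single_apply, eq_comm]
  rw [← LinearMap.det_toMatrix B, hmat, Matrix.det_fromBlocks_one₂₂, Matrix.det_unique]
  simp [Matrix.mul_apply]
  conv_rhs => rw [← b.sum_repr e, map_sum]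
  simp [mul_comm]

theorem det_fderiv_add_comp_line {𝕜 E : Type*} [NontriviallyNormedField 𝕜]
    [NormedAddCommGroup E] [NormedSpace 𝕜 E] [FiniteDimensional 𝕜 E]
    {g h : E → 𝕜} {g' h' : E →L[𝕜] 𝕜} {x₀ e η : E} {a : 𝕜}
    (hg : HasFDerivAt g g' (x₀ + a • e)) (hh : HasFDerivAt h h' η) :
    LinearMap.det (fderiv 𝕜 (fun p : 𝕜 × E => (g (x₀ + p.1 • e) + h p.2, x₀ + p.1 • e + p.2))
      (a, η)).toLinearMap = g' e - h' e := by
  have hline : HasFDerivAt (fun p : 𝕜 × E => x₀ + p.1 • e)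
      ((ContinuousLinearMap.fst 𝕜 𝕜 E).smulRight e) (a, η) :=
    ((ContinuousLinearMap.fst 𝕜 𝕜 E).smulRight e).hasFDerivAt.const_add x₀
  have hsnd := hasFDerivAt_snd (𝕜 := 𝕜) (E := 𝕜) (F := E) (p := (a, η))
  have hD : HasFDerivAt (fun p : 𝕜 × E => (g (x₀ + p.1 • e) + h p.2, x₀ + p.1 • e + p.2))
      ((g'.comp ((ContinuousLinearMap.fst 𝕜 𝕜 E).smulRight e) + h'.comp
        (ContinuousLinearMap.snd 𝕜 𝕜 E)).prod
        ((ContinuousLinearMap.fst 𝕜 𝕜 E).smulRight e + ContinuousLinearMap.snd 𝕜 𝕜 E)) (a, η) :=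
    ((hg.comp (a, η) hline).add (hh.comp (a, η) hsnd)).prodMk (hline.add hsnd)
  rw [hD.fderiv]
  refine LinearMap.det_eq_sub_of_apply_eq _ (g' e) h'.toLinearMap e fun s v => ?_
  simp [mul_comm]

theorem xfull_eq_add_smul_single (hd : 0 < d) (a : ℝ) (ξbar : Fin d → ℝ) :
    xfull d a ξbar = xfull d 0 ξbar + a • EuclideanSpace.single ⟨0, hd⟩ 1 := by
  ext i
  by_cases hi : (i : ℕ) = 0
  · simp [xfull, show i = ⟨0, hd⟩ from Fin.ext hi]
  · simp [xfull, hi, show i ≠ ⟨0, hd⟩ from fun h => hi (by rw [h])]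

theorem det_fderiv_Phi (hd : 0 < d) {α : ℝ} (hα : 1 < α) (a : ℝ) (ξbar : Fin d → ℝ) (η : Rd d) :
    LinearMap.det (fderiv ℝ (Phi d α ξbar) (a, η)).toLinearMap
      = α * (a * ‖xfull d a ξbar‖ ^ (α - 2) - η ⟨0, hd⟩ * ‖η‖ ^ (α - 2)) := by
  have hPhi : Phi d α ξbar = fun p : ℝ × Rd d =>
      (‖xfull d 0 ξbar + p.1 • EuclideanSpace.single ⟨0, hd⟩ 1‖ ^ α + ‖p.2‖ ^ α,
        xfull d 0 ξbar + p.1 • EuclideanSpace.single ⟨0, hd⟩ 1 + p.2) := by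
    simp only [← xfull_eq_add_smul_single hd]
    rfl
  rw [hPhi, det_fderiv_add_comp_line (hasFDerivAt_norm_rpow _ hα) (hasFDerivAt_norm_rpow η hα),
    ← xfull_eq_add_smul_single hd]
  simp [EuclideanSpace.inner_single_right, xfull]
  ring

theorem continuous_norm_rpow_sub_two_mul_inner {E : Type*} [NormedAddCommGroup E]
    [InnerProductSpace ℝ E] {p : ℝ} (hp : 1 < p) (e : E) :
    Continuous fun x : E => ‖x‖ ^ (p - 2) * inner ℝ x e := by
  have h := ((contDiff_norm_rpow (E := E) hp).continuous_fderiv one_ne_zero).clm_apply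
    (continuous_const (y := e))
  simp only [fderiv_norm_rpow _ hp, FunLike.coe_smul, Pi.smul_apply, innerSL_apply_apply,
    smul_eq_mul] at h
  simpa [mul_assoc, (by linarith : p ≠ 0)] using h.const_mul p⁻¹

theorem tendsto_coord_mul_norm_rpow_sub {p : ℝ} (hp : 1 < p) (i : Fin d) :
    Tendsto (fun q : Rd d × Rd d => q.1 i * ‖q.1‖ ^ (p - 2) - q.2 i * ‖q.2‖ ^ (p - 2))
      (nhds (0, EuclideanSpace.single i 1)) (nhds (-1)) := by
  have hcont : Continuous fun x : Rd d => x i * ‖x‖ ^ (p - 2) := by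
    simpa [EuclideanSpace.inner_single_right, mul_comm]
      using continuous_norm_rpow_sub_two_mul_inner hp (EuclideanSpace.single i (1 : ℝ))
  have hG : Continuous fun q : Rd d × Rd d => q.1 i * ‖q.1‖ ^ (p - 2) - q.2 i * ‖q.2‖ ^ (p - 2) :=
    (hcont.comp continuous_fst).sub (hcont.comp continuous_snd)
  simpa using hG.tendsto ((0 : Rd d), EuclideanSpace.single i (1 : ℝ))

theorem statement9 (d : ℕ) (hd : 2 ≤ d) (α : ℝ) (hα : 1 < α) :
    ∃ δ > 0, ∃ c > 0, ∃ C > 0, ∀ (a : ℝ) (ξbar : Fin d → ℝ) (η : Rd d),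
      ‖xfull d a ξbar‖ < δ →
      ‖η - EuclideanSpace.single (⟨0, by omega⟩ : Fin d) (1 : ℝ)‖ < δ →
      (|LinearMap.det (fderiv ℝ (Phi d α ξbar) (a, η)).toLinearMap|
          = α * |a * ‖xfull d a ξbar‖ ^ (α - 2) - η (⟨0, by omega⟩ : Fin d) * ‖η‖ ^ (α - 2)| ∧
        c ≤ |LinearMap.det (fderiv ℝ (Phi d α ξbar) (a, η)).toLinearMap| ∧
        |LinearMap.det (fderiv ℝ (Phi d α ξbar) (a, η)).toLinearMap| ≤ C) := by
  have hd0 : 0 < d := by omega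
  obtain ⟨δ, hδ, hnear⟩ := Metric.eventually_nhds_iff.mp <|
    Metric.tendsto_nhds.mp (tendsto_coord_mul_norm_rpow_sub hα ⟨0, hd0⟩) (1 / 2) one_half_pos
  refine ⟨δ, hδ, α / 2, by positivity, 3 * α / 2, by positivity, fun a ξbar η hξ hη => ?_⟩
  have hdist := hnear (y := (xfull d a ξbar, η)) <| by
    simpa [Prod.dist_eq, dist_eq_norm] using ⟨hξ, hη⟩
  have hcoord : xfull d a ξbar ⟨0, hd0⟩ = a := by simp [xfull]
  rw [hcoord, Real.dist_eq, sub_neg_eq_add] at hdist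
  obtain ⟨hlo, hhi⟩ := abs_lt.mp hdist
  rw [det_fderiv_Phi hd0 hα, abs_mul, abs_of_pos (by linarith : 0 < α)]
  refine ⟨rfl, ?_, ?_⟩ <;> rw [abs_of_neg (by linarith)] <;> nlinarith
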